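/- Every k-round word over an n-stack partitioned alphabet is k-scoped: if a word w can be written as k rounds, then for every stack h and every matched call–return pair (i,j) of stack h in w, the return position j lies within at most k maximal stack-h contexts after the context containing i (counting the context of i). -/

import Mathlib

inductive SymKind : Type
  | call | ret | intern
deriving DecidableEq

/-- Stack-semantics matching for stack `h`: scan the word left-to-right,
ignoring all symbols not belonging to stack `h`, pushing call positions of
stack `h` and popping on return positions of stack `h`. -/
def mpairsH {σ : Type*} {n : ℕ} (st : σ → Fin n) (kind : σ → SymKind) (h : Fin n) :
    List σ → ℕ → List ℕ → List (ℕ × ℕ)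
  | [], _, _ => []
  | a :: rest, i, stk =>
    if st a = h then
      match kind a with
      | SymKind.call => mpairsH st kind h rest (i + 1) (i :: stk)
      | SymKind.ret =>
        match stk with
        | [] => mpairsH st kind h rest (i + 1) []
        | c :: stk' => (c, i) :: mpairsH st kind h rest (i + 1) stk'
      | SymKind.intern => mpairsH st kind h rest (i + 1) stk
    else mpairsH st kind h rest (i + 1) stk

/-- `i` and `j` are a matched call–return pair of stack `h` in `w`. -/
def MatchedH {σ : Type*} {n : ℕ} (st : σ → Fin n) (kind : σ → SymKind)
    (h : Fin n) (w : List σ) (i j : ℕ) : Prop :=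
  (i, j) ∈ mpairsH st kind h w 0 []

/-- Position `p` starts a maximal stack-`h` context of `w`. -/
def StartsCtx {σ : Type*} {n : ℕ} (st : σ → Fin n) (h : Fin n) (w : List σ)
    (p : ℕ) : Prop :=
  (∃ a, w[p]? = some a ∧ st a = h) ∧
  (p = 0 ∨ ∀ b, w[p - 1]? = some b → st b ≠ h)

/-- Index (counting from 1) of the maximal stack-`h` context containing or
preceding position `i`: the number of maximal stack-`h` contexts starting at
or before `i`. -/
noncomputable def ctxIdx {σ : Type*} {n : ℕ} (st : σ → Fin n) (h : Fin n)
    (w : List σ) (i : ℕ) : ℕ :=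
  Nat.card {p : ℕ // p ≤ i ∧ StartsCtx st h w p}

/-- `w` is `k`-scoped: every matched return of stack `h` lies within at most
`k` maximal stack-`h` contexts from the one containing its call (inclusive). -/
def KScoped {σ : Type*} {n : ℕ} (st : σ → Fin n) (kind : σ → SymKind) (k : ℕ)
    (w : List σ) : Prop :=
  ∀ (h : Fin n) (i j : ℕ), MatchedH st kind h w i j →
    ctxIdx st h w j < ctxIdx st h w i + k

def IsContext {σ : Type*} {n : ℕ} (st : σ → Fin n) (h : Fin n) (u : List σ) : Prop :=
  ∀ a ∈ u, st a = h

def IsRound {σ : Type*} {n : ℕ} (st : σ → Fin n) (u : List σ) : Prop :=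
  ∃ f : Fin n → List σ, u = (List.ofFn f).flatten ∧ ∀ h, IsContext st h (f h)

def IsKRound {σ : Type*} {n : ℕ} (st : σ → Fin n) (k : ℕ) (w : List σ) : Prop :=
  ∃ g : Fin k → List σ, w = (List.ofFn g).flatten ∧ ∀ i, IsRound st (g i)

/-! In a round the stack-`h` symbols form the single factor contributed by stack `h`, so each
round contains at most one start of a maximal stack-`h` context and a `k`-round word at most `k`.
Hence every context index is at most `k`, while that of a call of stack `h` is at least `1`. -/

section Matching

variable {σ : Type*} {n : ℕ} {st : σ → Fin n} {kind : σ → SymKind} {h : Fin n}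

lemma fst_of_mem_mpairsH (P : ℕ → Prop) {w : List σ} {i₀ : ℕ} {stk : List ℕ}
    (hstk : ∀ c ∈ stk, P c) (hpos : ∀ p a, w[p]? = some a → st a = h → P (i₀ + p))
    {c r : ℕ} (hm : (c, r) ∈ mpairsH st kind h w i₀ stk) : P c := by
  induction w generalizing i₀ stk with
  | nil => simp [mpairsH] at hm
  | cons b w ih =>
    have hpos' : ∀ p a, w[p]? = some a → st a = h → P (i₀ + 1 + p) := fun p a ha hsa => by
      rw [Nat.add_right_comm, Nat.add_assoc]
      exact hpos (p + 1) a ha hsa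
    simp only [mpairsH] at hm
    split_ifs at hm with hsb
    · split at hm
      · have hb : P i₀ := by simpa using hpos 0 b rfl hsb
        exact ih (by simpa [hb] using hstk) hpos' hm
      · split at hm
        · exact ih (by simp) hpos' hm
        · rcases List.mem_cons.mp hm with heq | hm
          · cases heq
            exact hstk c List.mem_cons_self
          · exact ih (fun x hx => hstk x (List.mem_cons_of_mem _ hx)) hpos' hm
      · exact ih hstk hpos' hm
    · exact ih hstk hpos' hm

lemma MatchedH.exists_getElem? {w : List σ} {i j : ℕ} (hm : MatchedH st kind h w i j) :
    ∃ a, w[i]? = some a ∧ st a = h :=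
  fst_of_mem_mpairsH (fun c => ∃ a, w[c]? = some a ∧ st a = h) (by simp)
    (fun p a ha hsa => ⟨a, by simpa using ha, hsa⟩) hm

end Matching

section Contexts

variable {σ : Type*} {n : ℕ} {st : σ → Fin n} {h : Fin n}

lemma StartsCtx.lt_length {w : List σ} {p : ℕ} (hp : StartsCtx st h w p) : p < w.length :=
  (List.getElem?_eq_some_iff.mp hp.1.choose_spec.1).1

lemma finite_setOf_startsCtx (w : List σ) : {p | StartsCtx st h w p}.Finite :=
  (Set.finite_Iio w.length).subset fun _ hp => hp.lt_length

lemma exists_startsCtx_le {w : List σ} {i : ℕ} (hi : ∃ a, w[i]? = some a ∧ st a = h) :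
    ∃ p ≤ i, StartsCtx st h w p := by
  induction i with
  | zero => exact ⟨0, le_rfl, hi, Or.inl rfl⟩
  | succ m ih =>
    by_cases hprev : ∃ b, w[m]? = some b ∧ st b = h
    · obtain ⟨p, hpm, hp⟩ := ih hprev
      exact ⟨p, by omega, hp⟩
    · push Not at hprev
      exact ⟨m + 1, le_rfl, hi, Or.inr hprev⟩

lemma ctxIdx_le_ncard (w : List σ) (i : ℕ) :
    ctxIdx st h w i ≤ {p | StartsCtx st h w p}.ncard :=
  Set.ncard_le_ncard (fun _ hp => hp.2) (finite_setOf_startsCtx w)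

lemma ctxIdx_pos {w : List σ} {i : ℕ} (hi : ∃ a, w[i]? = some a ∧ st a = h) :
    0 < ctxIdx st h w i := by
  obtain ⟨p, hpi, hp⟩ := exists_startsCtx_le hi
  exact (Set.ncard_pos ((finite_setOf_startsCtx w).subset fun _ hq => hq.2)).mpr ⟨p, hpi, hp⟩

lemma ncard_startsCtx_append_le (u v : List σ) :
    {p | StartsCtx st h (u ++ v) p}.ncard ≤
      {p | StartsCtx st h u p}.ncard + {p | StartsCtx st h v p}.ncard := by
  have hsub : {p | StartsCtx st h (u ++ v) p} ⊆
      {p | StartsCtx st h u p} ∪ (· + u.length) '' {p | StartsCtx st h v p} := by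
    rintro p ⟨⟨a, ha, hsa⟩, hprev⟩
    rcases lt_or_ge p u.length with hpu | hpu
    · refine Or.inl ⟨⟨a, by rwa [List.getElem?_append_left hpu] at ha, hsa⟩, ?_⟩
      refine hprev.imp_right fun hne b hb => hne b ?_
      rwa [List.getElem?_append_left (by omega)]
    · refine Or.inr ⟨p - u.length,
        ⟨⟨a, by rwa [List.getElem?_append_right hpu] at ha, hsa⟩, ?_⟩, Nat.sub_add_cancel hpu⟩
      rcases hpu.eq_or_lt with hpu | hpu
      · exact Or.inl (by omega)
      · refine Or.inr fun b hb => hprev.resolve_left (by omega) b ?_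
        rw [List.getElem?_append_right (by omega)]
        rwa [Nat.sub_right_comm]
  calc _ ≤ ({p | StartsCtx st h u p} ∪ (· + u.length) '' {p | StartsCtx st h v p}).ncard :=
        Set.ncard_le_ncard hsub
          ((finite_setOf_startsCtx u).union ((finite_setOf_startsCtx v).image _))
    _ ≤ _ := Set.ncard_union_le _ _
    _ = _ := by rw [Set.ncard_image_of_injective _ (add_left_injective u.length)]

lemma ncard_startsCtx_flatten_le (L : List (List σ))
    (hL : ∀ u ∈ L, {p | StartsCtx st h u p}.ncard ≤ 1) :
    {p | StartsCtx st h L.flatten p}.ncard ≤ L.length := by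
  induction L with
  | nil => simp [StartsCtx]
  | cons u L ih =>
    rw [List.flatten_cons, List.length_cons, Nat.add_comm]
    exact (ncard_startsCtx_append_le u _).trans
      (Nat.add_le_add (hL u List.mem_cons_self) (ih fun v hv => hL v (List.mem_cons_of_mem _ hv)))

lemma eq_length_of_startsCtx_append_append {A C B : List σ} (hA : ∀ a ∈ A, st a ≠ h)
    (hC : IsContext st h C) (hB : ∀ a ∈ B, st a ≠ h) {p : ℕ}
    (hp : StartsCtx st h (A ++ C ++ B) p) : p = A.length := by
  obtain ⟨⟨a, ha, hsa⟩, hprev⟩ := hp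
  have hAp : A.length ≤ p := by
    by_contra! hpA
    rw [List.append_assoc, List.getElem?_append_left hpA] at ha
    exact hA a (List.mem_of_getElem? ha) hsa
  have hpC : p < A.length + C.length := by
    by_contra! hCp
    rw [List.getElem?_append_right (by simpa using hCp)] at ha
    exact hB a (List.mem_of_getElem? ha) hsa
  by_contra hne
  have hq : p - 1 - A.length < C.length := by omega
  refine hprev.elim (by omega) fun hprev =>
    hprev C[p - 1 - A.length] ?_ (hC _ (List.getElem_mem hq))
  rw [List.append_assoc, List.getElem?_append_right (by omega), List.getElem?_append_left hq,
    List.getElem?_eq_getElem hq]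

lemma IsRound.exists_eq_append_append {u : List σ} (hu : IsRound st u) (h : Fin n) :
    ∃ A C B : List σ, u = A ++ C ++ B ∧ (∀ a ∈ A, st a ≠ h) ∧ IsContext st h C ∧
      ∀ a ∈ B, st a ≠ h := by
  obtain ⟨f, rfl, hf⟩ := hu
  have hoff : ∀ i, i ≠ h → ∀ a ∈ f i, st a ≠ h := fun i hi a ha => hf i a ha ▸ hi
  have hh : h.val < (List.ofFn f).length := by simp
  refine ⟨((List.ofFn f).take h).flatten, f h, ((List.ofFn f).drop (h + 1)).flatten, ?_, ?_,
    hf h, ?_⟩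
  · conv_lhs => rw [← List.take_append_drop h (List.ofFn f), List.drop_eq_getElem_cons hh]
    simp
  · intro a ha
    obtain ⟨b, hb, hab⟩ := List.mem_flatten.mp ha
    obtain ⟨i, hi, rfl⟩ := List.mem_take_iff_getElem.mp hb
    rw [List.getElem_ofFn] at hab
    exact hoff _ (Fin.ne_of_lt (Fin.lt_def.mpr (hi.trans_le (min_le_left _ _)))) a hab
  · intro a ha
    obtain ⟨b, hb, hab⟩ := List.mem_flatten.mp ha
    obtain ⟨i, hi, rfl⟩ := List.mem_drop_iff_getElem.mp hb
    rw [List.getElem_ofFn] at hab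
    exact hoff _ (Fin.ne_of_gt (Fin.lt_def.mpr (by dsimp; omega))) a hab

lemma IsRound.ncard_startsCtx_le_one {u : List σ} (hu : IsRound st u) :
    {p | StartsCtx st h u p}.ncard ≤ 1 := by
  obtain ⟨A, C, B, rfl, hA, hC, hB⟩ := hu.exists_eq_append_append h
  calc _ ≤ ({A.length} : Set ℕ).ncard := Set.ncard_le_ncard
          (fun _ hp => eq_length_of_startsCtx_append_append hA hC hB hp) (Set.finite_singleton _)
    _ = 1 := Set.ncard_singleton _

lemma IsKRound.ncard_startsCtx_le {k : ℕ} {w : List σ} (hw : IsKRound st k w) :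
    {p | StartsCtx st h w p}.ncard ≤ k := by
  obtain ⟨g, rfl, hg⟩ := hw
  simpa using ncard_startsCtx_flatten_le (List.ofFn g) fun u hu => by
    obtain ⟨i, rfl⟩ := List.mem_ofFn.mp hu
    exact (hg i).ncard_startsCtx_le_one

end Contexts

/-- Every `k`-round word is `k`-scoped. -/
theorem kround_imp_kscoped {σ : Type*} {n : ℕ} (st : σ → Fin n)
    (kind : σ → SymKind) (k : ℕ) (w : List σ) (hw : IsKRound st k w) :
    KScoped st kind k w := by
  intro h i j hm
  calc ctxIdx st h w j ≤ {p | StartsCtx st h w p}.ncard := ctxIdx_le_ncard w j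
    _ ≤ k := hw.ncard_startsCtx_le
    _ < ctxIdx st h w i + k := by
      have := ctxIdx_pos hm.exists_getElem?
      omega
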